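/- For a countable amenable group G with Følner sequence (F_N), any set E ⊆ G with positive upper density d̄_{(F_N)}(E) > 0 admits a measure preserving system (X, B, μ, (T_g)) with a measurable set A such that μ(A) = d̄_{(F_N)}(E) and for every r ∈ ℕ and g_1,…,g_r ∈ G, d̄_{(F_N)}(g_1⁻¹E ∩ … ∩ g_r⁻¹E) ≥ μ(T_{g_1}⁻¹A ∩ … ∩ T_{g_r}⁻¹A). -/

import Mathlib

open Filter MeasureTheory Topology
open scoped symmDiff

/-- Density of `E` inside the finite set `F`. -/
noncomputable def densIn {G : Type*} (F : Finset G) (E : Set G) : ℝ :=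
  (((F : Set G) ∩ E).ncard : ℝ) / (F.card : ℝ)

/-- `F` is a (left) Følner sequence in `G`. -/
def IsFolnerSeq {G : Type*} [Group G] (F : ℕ → Finset G) : Prop :=
  (∀ N, (F N).Nonempty) ∧
    ∀ g : G, Tendsto
      (fun N => (((((g * ·) '' (F N : Set G)) ∆ (F N : Set G)).ncard : ℝ) / ((F N).card : ℝ)))
      atTop (𝓝 0)

/-- Upper density of `E ⊆ G` along the Følner sequence `F`. -/
noncomputable def upperDens {G : Type*} (F : ℕ → Finset G) (E : Set G) : ℝ :=
  Filter.limsup (fun N => densIn (F N) E) atTop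

/-!
Furstenberg correspondence. In the Cantor space `{0,1}^G` with the shift `(T_g y)(k) = y(k g)`,
`E = {h | T_h 1_E ∈ A}` for the clopen cylinder `A = {y | y 1 = 1}`. Average the Dirac masses
along the orbit of `1_E` over `F_N`, and let `μ` be the limit of these empirical measures (in the
compact space of probability measures) along an ultrafilter that realises the `limsup` defining
`d̄(E)`. Clopen sets have empty boundary, so by the portmanteau theorem `μ C` is the limit of the
densities of `{h | T_h 1_E ∈ C}`; the Følner property makes these limits shift invariant, and
clopen sets generate the Borel σ-algebra.
-/

open scoped ENNReal

lemma Set.ncard_inter_le_ncard_inter_add_ncard_symmDiff {α : Type*} {S T : Set α} (P : Set α)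
    (hT : T.Finite) (hST : (S ∆ T).Finite) :
    (S ∩ P).ncard ≤ (T ∩ P).ncard + (S ∆ T).ncard := by
  have hsub : S ∩ P ⊆ (T ∩ P) ∪ S ∆ T := by
    rintro y ⟨hyS, hyP⟩
    by_cases hyT : y ∈ T
    · exact Or.inl ⟨hyT, hyP⟩
    · exact Or.inr (Or.inl ⟨hyS, hyT⟩)
  exact (Set.ncard_le_ncard hsub ((hT.inter_of_left P).union hST)).trans (Set.ncard_union_le _ _)

section Density

variable {G : Type*}

lemma densIn_eq_card_filter (F : Finset G) (P : Set G) [DecidablePred (· ∈ P)] :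
    densIn F P = (F.filter (· ∈ P)).card / F.card := by
  rw [densIn, ← Set.ncard_coe_finset (F.filter _), Finset.coe_filter]
  rfl

lemma densIn_nonneg (F : Finset G) (P : Set G) : 0 ≤ densIn F P := by
  unfold densIn
  positivity

lemma densIn_le_one (F : Finset G) (P : Set G) : densIn F P ≤ 1 := by
  classical
  rw [densIn_eq_card_filter]
  exact div_le_one_of_le₀ (by exact_mod_cast Finset.card_filter_le _ _) (by positivity)

lemma abs_densIn_preimage_mul_sub_le [Group G] (F : Finset G) (g : G) (P : Set G) :
    |densIn F ((g * ·) ⁻¹' P) - densIn F P| ≤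
      ((((g * ·) '' (F : Set G)) ∆ (F : Set G)).ncard : ℝ) / (F.card : ℝ) := by
  have htranslate : ((F : Set G) ∩ (g * ·) ⁻¹' P).ncard = ((g * ·) '' (F : Set G) ∩ P).ncard := by
    rw [← Set.image_inter_preimage, Set.ncard_image_of_injective _ (mul_right_injective g)]
  have hfin : (((g * ·) '' (F : Set G)) ∆ (F : Set G)).Finite :=
    (F.finite_toSet.image _).symmDiff F.finite_toSet
  have h₁ := Set.ncard_inter_le_ncard_inter_add_ncard_symmDiff P F.finite_toSet hfin
  have h₂ := Set.ncard_inter_le_ncard_inter_add_ncard_symmDiff P (F.finite_toSet.image _)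
    (symmDiff_comm (α := Set G) _ _ ▸ hfin)
  rw [symmDiff_comm] at h₂
  unfold densIn
  rw [htranslate, ← sub_div, abs_div, Nat.abs_cast]
  gcongr
  rw [abs_sub_le_iff, sub_le_iff_le_add', sub_le_iff_le_add']
  exact ⟨by exact_mod_cast h₁, by exact_mod_cast h₂⟩

end Density

section EmpiricalMeasure

variable {G X : Type*} [MeasurableSpace X]

noncomputable def empiricalMeasure (F : Finset G) (x : G → X) : Measure X :=
  (F.card : ℝ≥0∞)⁻¹ • ∑ h ∈ F, Measure.dirac (x h)

lemma toReal_empiricalMeasure_apply (F : Finset G) (x : G → X) {S : Set X} (hS : MeasurableSet S) :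
    (empiricalMeasure F x S).toReal = densIn F (x ⁻¹' S) := by
  classical
  simp only [empiricalMeasure, Measure.smul_apply, Measure.coe_finsetSum, Finset.sum_apply,
    Measure.dirac_apply' _ hS, Set.indicator_apply, Pi.one_apply, smul_eq_mul, Finset.sum_boole]
  rw [densIn_eq_card_filter, ENNReal.toReal_mul, ENNReal.toReal_inv, ENNReal.toReal_natCast,
    ENNReal.toReal_natCast, inv_mul_eq_div]
  rfl

lemma isProbabilityMeasure_empiricalMeasure {F : Finset G} (hF : F.Nonempty) (x : G → X) :
    IsProbabilityMeasure (empiricalMeasure F x) := by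
  constructor
  simpa [empiricalMeasure] using ENNReal.inv_mul_cancel (by simpa using hF.ne_empty) (by simp)

end EmpiricalMeasure

section Clopen

variable {X : Type*} [TopologicalSpace X] [CompactSpace X] [T2Space X] [TotallyDisconnectedSpace X]
  [SecondCountableTopology X] [MeasurableSpace X] [BorelSpace X]

lemma measurableSpace_eq_generateFrom_isClopen :
    ‹MeasurableSpace X› = MeasurableSpace.generateFrom {C : Set X | IsClopen C} :=
  BorelSpace.measurable_eq.trans
    (borel_eq_generateFrom_of_subbasis isTopologicalBasis_isClopen.eq_generateFrom)

lemma measurePreserving_of_measure_preimage_isClopen {μ : Measure X} [IsFiniteMeasure μ]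
    {f : X → X} (hf : Continuous f) (h : ∀ C, IsClopen C → μ (f ⁻¹' C) = μ C) :
    MeasurePreserving f μ μ := by
  refine ⟨hf.measurable, ext_of_generate_finite _ measurableSpace_eq_generateFrom_isClopen
    (fun _ hS _ hT _ => hS.inter hT) (fun C hC => ?_) ?_⟩
  · rw [Measure.map_apply hf.measurable hC.isOpen.measurableSet, h C hC]
  · rw [Measure.map_apply hf.measurable .univ, Set.preimage_univ]

end Clopen

section WeakLimit

variable {G X : Type*} [TopologicalSpace X] [CompactSpace X] [TopologicalSpace.MetrizableSpace X]
  [MeasurableSpace X] [BorelSpace X]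

theorem exists_isProbabilityMeasure_tendsto_densIn {F : ℕ → Finset G} (hF : ∀ N, (F N).Nonempty)
    (x : G → X) (U : Ultrafilter ℕ) :
    ∃ μ : Measure X, IsProbabilityMeasure μ ∧ ∀ C, IsClopen C →
      Tendsto (fun N => densIn (F N) (x ⁻¹' C)) U (𝓝 (μ C).toReal) := by
  let ν : ℕ → ProbabilityMeasure X := fun N =>
    ⟨empiricalMeasure (F N) x, isProbabilityMeasure_empiricalMeasure (hF N) x⟩
  obtain ⟨μ, -, hμ⟩ := isCompact_univ.ultrafilter_le_nhds (U.map ν) (by simp)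
  refine ⟨μ, inferInstance, fun C hC => ?_⟩
  have := NNReal.tendsto_coe.mpr
    (ProbabilityMeasure.tendsto_measure_of_isClopen_of_tendsto (Ultrafilter.coe_map ν U ▸ hμ) hC)
  simpa only [ν, ProbabilityMeasure.mk_apply, ENNReal.coe_toNNReal_eq_toReal,
    ProbabilityMeasure.coeFn_def, toReal_empiricalMeasure_apply _ _ hC.isOpen.measurableSet]
    using this

end WeakLimit

lemma IsFolnerSeq.tendsto_densIn_preimage_mul {G : Type*} [Group G] {F : ℕ → Finset G}
    (hF : IsFolnerSeq F) {l : Filter ℕ} (hl : l ≤ atTop) (g : G) {P : Set G} {a : ℝ}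
    (h : Tendsto (fun N => densIn (F N) P) l (𝓝 a)) :
    Tendsto (fun N => densIn (F N) ((g * ·) ⁻¹' P)) l (𝓝 a) :=
  h.congr_dist <| squeeze_zero (fun _ => dist_nonneg)
    (fun N => by rw [dist_comm, Real.dist_eq]; exact abs_densIn_preimage_mul_sub_le _ g P)
    ((hF.2 g).mono_left hl)

theorem exists_invariant_measure_of_isFolnerSeq {G X : Type*} [Group G] [TopologicalSpace X]
    [CompactSpace X] [TopologicalSpace.MetrizableSpace X] [TotallyDisconnectedSpace X]
    [MeasurableSpace X] [BorelSpace X] {F : ℕ → Finset G} (hF : IsFolnerSeq F)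
    (T : G → X → X) (hT : ∀ g, Continuous (T g)) (x : G → X)
    (hx : ∀ g h, T g (x h) = x (g * h)) {A : Set X} (hA : IsClopen A) :
    ∃ μ : Measure X, IsProbabilityMeasure μ ∧ (∀ g, MeasurePreserving (T g) μ μ) ∧
      (μ A).toReal = upperDens F (x ⁻¹' A) ∧
      ∀ C, IsClopen C → (μ C).toReal ≤ upperDens F (x ⁻¹' C) := by
  have hbdd (P : Set G) : IsBoundedUnder (· ≤ ·) atTop fun N => densIn (F N) P :=
    isBoundedUnder_of ⟨1, fun N => densIn_le_one _ _⟩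
  obtain ⟨U, hU, hUA⟩ := mapClusterPt_iff_ultrafilter.mp <| MapClusterPt.limsup
    (isCoboundedUnder_le_of_le atTop fun N => densIn_nonneg _ (x ⁻¹' A)) (hbdd _)
  obtain ⟨μ, hμ, hlim⟩ := exists_isProbabilityMeasure_tendsto_densIn hF.1 x U
  refine ⟨μ, hμ, fun g => measurePreserving_of_measure_preimage_isClopen (hT g) fun C hC => ?_,
    tendsto_nhds_unique (hlim A hA) hUA,
    fun C hC => (mapClusterPt_iff_ultrafilter.mpr ⟨U, hU, hlim C hC⟩).le_limsup (hbdd _)⟩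
  have hpre : x ⁻¹' (T g ⁻¹' C) = (g * ·) ⁻¹' (x ⁻¹' C) := by
    ext h
    simp only [Set.mem_preimage, hx]
  have hinv := hF.tendsto_densIn_preimage_mul hU g (hlim C hC)
  rw [← hpre] at hinv
  exact (ENNReal.toReal_eq_toReal_iff' (measure_ne_top _ _) (measure_ne_top _ _)).mp
    (tendsto_nhds_unique (hlim _ (hC.preimage (hT g))) hinv)

/- `Shrink.{0} G` is a copy of `G` in `Type`, so that the system lives in `Type` as the statement
asks. -/
namespace FurstenbergSystem

instance {G : Type*} [Countable G] : Countable (Shrink.{0} G) :=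
  Countable.of_equiv G (equivShrink.{0} G)

variable {G : Type*} [Group G] [Countable G]

noncomputable def rightShift (g : G) (y : Shrink.{0} G → Bool) : Shrink.{0} G → Bool :=
  fun k => y (equivShrink.{0} G ((equivShrink.{0} G).symm k * g))

open Classical in
noncomputable def orbitPoint (E : Set G) (h : G) : Shrink.{0} G → Bool :=
  fun k => decide ((equivShrink.{0} G).symm k * h ∈ E)

def cylinderOne (G : Type*) [Group G] [Countable G] : Set (Shrink.{0} G → Bool) :=
  {y | y (equivShrink.{0} G 1) = true}

lemma rightShift_rightShift (g h : G) (y : Shrink.{0} G → Bool) :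
    rightShift g (rightShift h y) = rightShift (g * h) y := by
  ext k
  simp only [rightShift, Equiv.symm_apply_apply, mul_assoc]

lemma continuous_rightShift (g : G) : Continuous (rightShift g) :=
  continuous_pi fun _ => continuous_apply _

lemma rightShift_orbitPoint (E : Set G) (g h : G) :
    rightShift g (orbitPoint E h) = orbitPoint E (g * h) := by
  ext k
  simp [rightShift, orbitPoint, mul_assoc]

lemma isClopen_cylinderOne : IsClopen (cylinderOne G) :=
  (isClopen_discrete {true}).preimage (continuous_apply _)

lemma orbitPoint_mem_cylinderOne (E : Set G) (h : G) : orbitPoint E h ∈ cylinderOne G ↔ h ∈ E := by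
  simp [orbitPoint, cylinderOne]

lemma orbitPoint_preimage_cylinderOne (E : Set G) : orbitPoint E ⁻¹' cylinderOne G = E :=
  Set.ext (orbitPoint_mem_cylinderOne E)

end FurstenbergSystem

open FurstenbergSystem in
theorem stmt0_general {G : Type*} [Group G] [Countable G] (F : ℕ → Finset G)
    (hF : IsFolnerSeq F) (E : Set G) :
    ∃ (X : Type) (_ : MeasurableSpace X) (μ : Measure X) (_ : IsProbabilityMeasure μ)
      (T : G → X → X) (A : Set X),
      (∀ g : G, MeasurePreserving (T g) μ μ) ∧
      (∀ g h : G, ∀ x : X, T g (T h x) = T (g * h) x) ∧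
      MeasurableSet A ∧
      (μ A).toReal = upperDens F E ∧
      ∀ (r : ℕ) (gs : Fin r → G),
        (μ (⋂ i : Fin r, T (gs i) ⁻¹' A)).toReal ≤
          upperDens F (⋂ i : Fin r, (fun x => gs i * x) ⁻¹' E) := by
  obtain ⟨μ, hμ, hT, hA, hC⟩ := exists_invariant_measure_of_isFolnerSeq hF rightShift
    continuous_rightShift (orbitPoint E) (rightShift_orbitPoint E) isClopen_cylinderOne
  refine ⟨_, inferInstance, μ, hμ, rightShift, cylinderOne G, hT, rightShift_rightShift,
    isClopen_cylinderOne.isOpen.measurableSet, by rwa [orbitPoint_preimage_cylinderOne] at hA,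
    fun r gs => ?_⟩
  have hpre : orbitPoint E ⁻¹' ⋂ i, rightShift (gs i) ⁻¹' cylinderOne G =
      ⋂ i, (fun x => gs i * x) ⁻¹' E := by
    ext h
    simp only [Set.mem_preimage, Set.mem_iInter, rightShift_orbitPoint, orbitPoint_mem_cylinderOne]
  exact hpre ▸ hC _ (isClopen_iInter_of_finite fun i =>
    isClopen_cylinderOne.preimage (continuous_rightShift (gs i)))

theorem stmt0 {G : Type*} [Group G] [Countable G] (F : ℕ → Finset G)
    (hF : IsFolnerSeq F) (E : Set G) (hE : 0 < upperDens F E) :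
    ∃ (X : Type) (_ : MeasurableSpace X) (μ : Measure X) (_ : IsProbabilityMeasure μ)
      (T : G → X → X) (A : Set X),
      (∀ g : G, MeasurePreserving (T g) μ μ) ∧
      (∀ g h : G, ∀ x : X, T g (T h x) = T (g * h) x) ∧
      MeasurableSet A ∧
      (μ A).toReal = upperDens F E ∧
      ∀ (r : ℕ) (gs : Fin r → G),
        (μ (⋂ i : Fin r, T (gs i) ⁻¹' A)).toReal ≤
          upperDens F (⋂ i : Fin r, (fun x => gs i * x) ⁻¹' E) :=
  stmt0_general F hF E
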